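/- The family of monotones X ↦ Q_A(X) is not a complete set of monotones for the post-processing order on POVMs. Concretely: let (E_i)_{i=1,…,4} be the qubit SIC-POVM with effects E_i = |ψ_i⟩⟨ψ_i|/2 where |ψ₁⟩ = |0⟩, |ψ₂⟩ = (|0⟩+√2|1⟩)/√3, |ψ₃⟩ = (|0⟩+√2 e^{2πi/3}|1⟩)/√3, |ψ₄⟩ = (|0⟩+√2 e^{4πi/3}|1⟩)/√3, and let R = (1/9)·[[10,3,0,0],[−1,3,6,0],[0,3,3,0],[0,0,0,9]]. Define B_b = ∑_a R_{b,a} E_a. Then (B_b) is a POVM with nonzero effects, and Q_B(X) ≤ Q_E(X) for every 2×2 complex matrix X, yet there exist NO nonnegative reals μ(b|a) with ∑_b μ(b|a) = 1 for every a and B_b = ∑_a μ(b|a) E_a for every b. -/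

import Mathlib

open Matrix
open scoped ComplexOrder

/-- The four SIC states of the qubit SIC-POVM in the counterexample. -/
noncomputable def sicVec : Fin 4 → Fin 2 → ℂ :=
  ![![1, 0],
    ![1 / Real.sqrt 3, Real.sqrt 2 / Real.sqrt 3],
    ![1 / Real.sqrt 3, (Real.sqrt 2 / Real.sqrt 3) * Complex.exp (2 * Real.pi * Complex.I / 3)],
    ![1 / Real.sqrt 3, (Real.sqrt 2 / Real.sqrt 3) * Complex.exp (4 * Real.pi * Complex.I / 3)]]

/-- The qubit SIC-POVM effects `E_i = |ψ_i⟩⟨ψ_i| / 2`. -/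
noncomputable def sicEffect (a : Fin 4) : Matrix (Fin 2) (Fin 2) ℂ :=
  (1 / 2 : ℂ) • vecMulVec (sicVec a) (star (sicVec a))

/-- The matrix `R` (columns sum to `1` but with a negative entry). -/
noncomputable def Rmat : Matrix (Fin 4) (Fin 4) ℝ :=
  (1 / 9 : ℝ) • !![10, 3, 0, 0; -1, 3, 6, 0; 0, 3, 3, 0; 0, 0, 0, 9]

/-- The transformed effects `B_b = ∑_a R_{b,a} E_a`. -/
noncomputable def Beffect (b : Fin 4) : Matrix (Fin 2) (Fin 2) ℂ :=
  ∑ a, (Rmat b a : ℂ) • sicEffect a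

lemma exp_2pi3 : Complex.exp (2 * Real.pi * Complex.I / 3) =
    (-1 + (Real.sqrt 3 : ℂ) * Complex.I) / 2 := by
  have h : (2 * Real.pi * Complex.I / 3 : ℂ) = ((2 * Real.pi / 3 : ℝ) : ℂ) * Complex.I := by
    push_cast; ring
  rw [h, Complex.exp_mul_I, ← Complex.ofReal_cos, ← Complex.ofReal_sin]
  have hc : Real.cos (2 * Real.pi / 3) = -(1/2) := by
    have : (2 * Real.pi / 3 : ℝ) = Real.pi - Real.pi / 3 := by ring
    rw [this, Real.cos_pi_sub, Real.cos_pi_div_three]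
  have hs : Real.sin (2 * Real.pi / 3) = Real.sqrt 3 / 2 := by
    have : (2 * Real.pi / 3 : ℝ) = Real.pi - Real.pi / 3 := by ring
    rw [this, Real.sin_pi_sub, Real.sin_pi_div_three]
  rw [hc, hs]; push_cast; ring

lemma exp_4pi3 : Complex.exp (4 * Real.pi * Complex.I / 3) =
    (-1 - (Real.sqrt 3 : ℂ) * Complex.I) / 2 := by
  have h : (4 * Real.pi * Complex.I / 3 : ℂ) = ((4 * Real.pi / 3 : ℝ) : ℂ) * Complex.I := by
    push_cast; ring
  rw [h, Complex.exp_mul_I, ← Complex.ofReal_cos, ← Complex.ofReal_sin]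
  have hc : Real.cos (4 * Real.pi / 3) = -(1/2) := by
    have : (4 * Real.pi / 3 : ℝ) = Real.pi + Real.pi / 3 := by ring
    rw [this, Real.cos_add, Real.cos_pi, Real.sin_pi, Real.cos_pi_div_three]; ring
  have hs : Real.sin (4 * Real.pi / 3) = -(Real.sqrt 3 / 2) := by
    have : (4 * Real.pi / 3 : ℝ) = Real.pi + Real.pi / 3 := by ring
    rw [this, Real.sin_add, Real.cos_pi, Real.sin_pi, Real.sin_pi_div_three]; ring
  rw [hc, hs]; push_cast; ring


noncomputable abbrev c2 : ℂ := (Real.sqrt 2 : ℝ)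
noncomputable abbrev c3 : ℂ := (Real.sqrt 3 : ℝ)

lemma c2_sq : c2 * c2 = 2 := by
  norm_cast; exact Real.mul_self_sqrt (by norm_num)
lemma c3_sq : c3 * c3 = 3 := by
  norm_cast; exact Real.mul_self_sqrt (by norm_num)
lemma c3_ne : c3 ≠ 0 := by
  simp only [ne_eq, Complex.ofReal_eq_zero]; positivity

lemma inv_c3 : (Real.sqrt 3 : ℂ)⁻¹ = c3 / 3 :=
  inv_eq_of_mul_eq_one_right (by linear_combination c3_sq / 3)

lemma sicVec0 : sicVec 0 = ![1, 0] := by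
  funext j; fin_cases j <;>
    simp only [sicVec, Matrix.cons_val_zero, Matrix.cons_val_one, Matrix.head_cons,
      Matrix.cons_val_two, Matrix.tail_cons, Matrix.cons_val_three, Fin.mk_zero, Fin.mk_one]

lemma sicVec1 : sicVec 1 = ![c3/3, c2*c3/3] := by
  funext j; fin_cases j <;>
    · simp only [sicVec, Matrix.cons_val_zero, Matrix.cons_val_one, Matrix.head_cons,
        Matrix.cons_val_two, Matrix.tail_cons, Matrix.cons_val_three, Fin.mk_zero, Fin.mk_one]
      rw [div_eq_mul_inv, inv_c3]; ring

lemma sicVec2 : sicVec 2 = ![c3/3, c2*c3*(-1 + c3*Complex.I)/6] := by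
  funext j; fin_cases j <;>
    · simp only [sicVec, Matrix.cons_val_zero, Matrix.cons_val_one, Matrix.head_cons,
        Matrix.cons_val_two, Matrix.tail_cons, Matrix.cons_val_three, Fin.mk_zero, Fin.mk_one,
        exp_2pi3]
      rw [div_eq_mul_inv, inv_c3]; ring

lemma sicVec3 : sicVec 3 = ![c3/3, c2*c3*(-1 - c3*Complex.I)/6] := by
  funext j; fin_cases j <;>
    · simp only [sicVec, Matrix.cons_val_zero, Matrix.cons_val_one, Matrix.head_cons,
        Matrix.cons_val_two, Matrix.tail_cons, Matrix.cons_val_three, Fin.mk_zero, Fin.mk_one,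
        exp_4pi3]
      rw [div_eq_mul_inv, inv_c3]; ring

lemma sicEffect0 : sicEffect 0 = !![1/2, 0; 0, 0] := by
  ext i j
  fin_cases i <;> fin_cases j <;>
    · simp only [sicEffect, sicVec0, vecMulVec_apply, Matrix.smul_apply, Pi.star_apply,
        Matrix.cons_val_zero, Matrix.cons_val_one, Matrix.head_cons, smul_eq_mul,
        Matrix.of_apply, Fin.mk_zero, Fin.mk_one, RCLike.star_def, map_zero, _root_.map_one]
      norm_num

lemma sicEffect1 : sicEffect 1 = !![1/6, c2/6; c2/6, 1/3] := by
  ext i j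
  fin_cases i <;> fin_cases j
  · simp only [sicEffect, sicVec1, vecMulVec_apply, Matrix.smul_apply, Pi.star_apply,
      Matrix.cons_val_zero, Matrix.cons_val_one, Matrix.head_cons, smul_eq_mul,
      Matrix.of_apply, Fin.mk_zero, Fin.mk_one, RCLike.star_def, map_div₀, _root_.map_mul,
      Complex.conj_ofReal, map_ofNat]
    linear_combination (1/18 : ℂ) * c3_sq
  · simp only [sicEffect, sicVec1, vecMulVec_apply, Matrix.smul_apply, Pi.star_apply,
      Matrix.cons_val_zero, Matrix.cons_val_one, Matrix.head_cons, smul_eq_mul,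
      Matrix.of_apply, Fin.mk_zero, Fin.mk_one, RCLike.star_def, map_div₀, _root_.map_mul,
      Complex.conj_ofReal, map_ofNat]
    linear_combination (c2/18) * c3_sq
  · simp only [sicEffect, sicVec1, vecMulVec_apply, Matrix.smul_apply, Pi.star_apply,
      Matrix.cons_val_zero, Matrix.cons_val_one, Matrix.head_cons, smul_eq_mul,
      Matrix.of_apply, Fin.mk_zero, Fin.mk_one, RCLike.star_def, map_div₀, _root_.map_mul,
      Complex.conj_ofReal, map_ofNat]
    linear_combination (c2/18) * c3_sq
  · simp only [sicEffect, sicVec1, vecMulVec_apply, Matrix.smul_apply, Pi.star_apply,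
      Matrix.cons_val_zero, Matrix.cons_val_one, Matrix.head_cons, smul_eq_mul,
      Matrix.of_apply, Fin.mk_zero, Fin.mk_one, RCLike.star_def, map_div₀, _root_.map_mul,
      Complex.conj_ofReal, map_ofNat]
    linear_combination (c3*c3/18) * c2_sq + (1/9 : ℂ) * c3_sq

section
set_option maxHeartbeats 400000

lemma sicEffect2 : sicEffect 2 =
    !![1/6, c2*(-1-c3*Complex.I)/12; c2*(-1+c3*Complex.I)/12, 1/3] := by
  ext i j
  fin_cases i <;> fin_cases j
  · simp only [sicEffect, sicVec2, vecMulVec_apply, Matrix.smul_apply, Pi.star_apply,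
      Matrix.cons_val_zero, Matrix.cons_val_one, Matrix.head_cons, smul_eq_mul,
      Matrix.of_apply, Fin.mk_zero, Fin.mk_one, RCLike.star_def, map_div₀, _root_.map_mul,
      map_add, map_sub, map_neg, _root_.map_one, Complex.conj_ofReal, Complex.conj_I, map_ofNat]
    linear_combination (1/18 : ℂ) * c3_sq
  · simp only [sicEffect, sicVec2, vecMulVec_apply, Matrix.smul_apply, Pi.star_apply,
      Matrix.cons_val_zero, Matrix.cons_val_one, Matrix.head_cons, smul_eq_mul,
      Matrix.of_apply, Fin.mk_zero, Fin.mk_one, RCLike.star_def, map_div₀, _root_.map_mul,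
      map_add, map_sub, map_neg, _root_.map_one, Complex.conj_ofReal, Complex.conj_I, map_ofNat]
    linear_combination (c2*(-1-c3*Complex.I)/36) * c3_sq
  · simp only [sicEffect, sicVec2, vecMulVec_apply, Matrix.smul_apply, Pi.star_apply,
      Matrix.cons_val_zero, Matrix.cons_val_one, Matrix.head_cons, smul_eq_mul,
      Matrix.of_apply, Fin.mk_zero, Fin.mk_one, RCLike.star_def, map_div₀, _root_.map_mul,
      map_add, map_sub, map_neg, _root_.map_one, Complex.conj_ofReal, Complex.conj_I, map_ofNat]
    linear_combination (c2*(-1+c3*Complex.I)/36) * c3_sq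
  · simp only [sicEffect, sicVec2, vecMulVec_apply, Matrix.smul_apply, Pi.star_apply,
      Matrix.cons_val_zero, Matrix.cons_val_one, Matrix.head_cons, smul_eq_mul,
      Matrix.of_apply, Fin.mk_zero, Fin.mk_one, RCLike.star_def, map_div₀, _root_.map_mul,
      map_add, map_sub, map_neg, _root_.map_one, Complex.conj_ofReal, Complex.conj_I, map_ofNat]
    linear_combination (1/6 : ℂ) * c2_sq + (c2*c2*(c3*c3+4)/72) * c3_sq
      + (-(c2*c2*c3*c3*c3*c3)/72) * Complex.I_mul_I

lemma sicEffect3 : sicEffect 3 =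
    !![1/6, c2*(-1+c3*Complex.I)/12; c2*(-1-c3*Complex.I)/12, 1/3] := by
  ext i j
  fin_cases i <;> fin_cases j
  · simp only [sicEffect, sicVec3, vecMulVec_apply, Matrix.smul_apply, Pi.star_apply,
      Matrix.cons_val_zero, Matrix.cons_val_one, Matrix.head_cons, smul_eq_mul,
      Matrix.of_apply, Fin.mk_zero, Fin.mk_one, RCLike.star_def, map_div₀, _root_.map_mul,
      map_add, map_sub, map_neg, _root_.map_one, Complex.conj_ofReal, Complex.conj_I, map_ofNat]
    linear_combination (1/18 : ℂ) * c3_sq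
  · simp only [sicEffect, sicVec3, vecMulVec_apply, Matrix.smul_apply, Pi.star_apply,
      Matrix.cons_val_zero, Matrix.cons_val_one, Matrix.head_cons, smul_eq_mul,
      Matrix.of_apply, Fin.mk_zero, Fin.mk_one, RCLike.star_def, map_div₀, _root_.map_mul,
      map_add, map_sub, map_neg, _root_.map_one, Complex.conj_ofReal, Complex.conj_I, map_ofNat]
    linear_combination (c2*(-1+c3*Complex.I)/36) * c3_sq
  · simp only [sicEffect, sicVec3, vecMulVec_apply, Matrix.smul_apply, Pi.star_apply,
      Matrix.cons_val_zero, Matrix.cons_val_one, Matrix.head_cons, smul_eq_mul,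
      Matrix.of_apply, Fin.mk_zero, Fin.mk_one, RCLike.star_def, map_div₀, _root_.map_mul,
      map_add, map_sub, map_neg, _root_.map_one, Complex.conj_ofReal, Complex.conj_I, map_ofNat]
    linear_combination (c2*(-1-c3*Complex.I)/36) * c3_sq
  · simp only [sicEffect, sicVec3, vecMulVec_apply, Matrix.smul_apply, Pi.star_apply,
      Matrix.cons_val_zero, Matrix.cons_val_one, Matrix.head_cons, smul_eq_mul,
      Matrix.of_apply, Fin.mk_zero, Fin.mk_one, RCLike.star_def, map_div₀, _root_.map_mul,
      map_add, map_sub, map_neg, _root_.map_one, Complex.conj_ofReal, Complex.conj_I, map_ofNat]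
    linear_combination (1/6 : ℂ) * c2_sq + (c2*c2*(c3*c3+4)/72) * c3_sq
      + (-(c2*c2*c3*c3*c3*c3)/72) * Complex.I_mul_I
end

lemma Beff0 : Beffect 0 = !![11/18, c2/18; c2/18, 1/9] := by
  simp only [Beffect, Fin.sum_univ_four, sicEffect0, sicEffect1, sicEffect2, sicEffect3]
  ext i j
  fin_cases i <;> fin_cases j <;>
    · simp only [Rmat, Matrix.smul_apply, Matrix.add_apply, Matrix.cons_val_zero,
        Matrix.cons_val_one, Matrix.head_cons, Matrix.cons_val_two, Matrix.tail_cons,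
        Matrix.cons_val_three, Fin.mk_zero, Fin.mk_one, smul_eq_mul, Matrix.of_apply,
        Complex.ofReal_mul, Complex.ofReal_div, Complex.ofReal_ofNat, Complex.ofReal_one,
        Complex.ofReal_neg, Complex.ofReal_zero]
      push_cast
      ring

lemma Beff1 : Beffect 1 = !![1/9, -(c2*c3*Complex.I)/18; c2*c3*Complex.I/18, 1/3] := by
  simp only [Beffect, Fin.sum_univ_four, sicEffect0, sicEffect1, sicEffect2, sicEffect3]
  ext i j
  fin_cases i <;> fin_cases j <;>
    · simp only [Rmat, Matrix.smul_apply, Matrix.add_apply, Matrix.cons_val_zero,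
        Matrix.cons_val_one, Matrix.head_cons, Matrix.cons_val_two, Matrix.tail_cons,
        Matrix.cons_val_three, Fin.mk_zero, Fin.mk_one, smul_eq_mul, Matrix.of_apply,
        Complex.ofReal_mul, Complex.ofReal_div, Complex.ofReal_ofNat, Complex.ofReal_one,
        Complex.ofReal_neg, Complex.ofReal_zero]
      push_cast
      ring

lemma Beff2 : Beffect 2 = !![1/9, c2*(1-c3*Complex.I)/36; c2*(1+c3*Complex.I)/36, 2/9] := by
  simp only [Beffect, Fin.sum_univ_four, sicEffect0, sicEffect1, sicEffect2, sicEffect3]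
  ext i j
  fin_cases i <;> fin_cases j <;>
    · simp only [Rmat, Matrix.smul_apply, Matrix.add_apply, Matrix.cons_val_zero,
        Matrix.cons_val_one, Matrix.head_cons, Matrix.cons_val_two, Matrix.tail_cons,
        Matrix.cons_val_three, Fin.mk_zero, Fin.mk_one, smul_eq_mul, Matrix.of_apply,
        Complex.ofReal_mul, Complex.ofReal_div, Complex.ofReal_ofNat, Complex.ofReal_one,
        Complex.ofReal_neg, Complex.ofReal_zero]
      push_cast
      ring

lemma Beff3 : Beffect 3 = !![1/6, c2*(-1+c3*Complex.I)/12; c2*(-1-c3*Complex.I)/12, 1/3] := by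
  simp only [Beffect, Fin.sum_univ_four, sicEffect0, sicEffect1, sicEffect2, sicEffect3]
  ext i j
  fin_cases i <;> fin_cases j <;>
    · simp only [Rmat, Matrix.smul_apply, Matrix.add_apply, Matrix.cons_val_zero,
        Matrix.cons_val_one, Matrix.head_cons, Matrix.cons_val_two, Matrix.tail_cons,
        Matrix.cons_val_three, Fin.mk_zero, Fin.mk_one, smul_eq_mul, Matrix.of_apply,
        Complex.ofReal_mul, Complex.ofReal_div, Complex.ofReal_ofNat, Complex.ofReal_one,
        Complex.ofReal_neg, Complex.ofReal_zero]
      push_cast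
      ring

lemma psd2_aux (ar cr br bi u0 v0 u1 v1 : ℝ) (ha : 0 ≤ ar) (hc : 0 ≤ cr)
    (hb : br^2 + bi^2 ≤ ar * cr) :
    0 ≤ ar*(u0^2+v0^2) + cr*(u1^2+v1^2) + 2*br*(u0*u1+v0*v1) + 2*bi*(v0*u1-u0*v1) := by
  have hST : (u0*u1+v0*v1)^2 + (v0*u1-u0*v1)^2 = (u0^2+v0^2) * (u1^2+v1^2) := by ring
  have h1 : (br*(u0*u1+v0*v1) + bi*(v0*u1-u0*v1))^2
      ≤ (br^2 + bi^2) * ((u0^2+v0^2)*(u1^2+v1^2)) := by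
    nlinarith [sq_nonneg (br*(v0*u1-u0*v1) - bi*(u0*u1+v0*v1))]
  have h2 : (br^2+bi^2) * ((u0^2+v0^2)*(u1^2+v1^2)) ≤ (ar*cr) * ((u0^2+v0^2)*(u1^2+v1^2)) :=
    mul_le_mul_of_nonneg_right hb (by positivity)
  have h3 : 4*((ar*cr)*((u0^2+v0^2)*(u1^2+v1^2)))
      ≤ (ar*(u0^2+v0^2) + cr*(u1^2+v1^2))^2 := by
    nlinarith [sq_nonneg (ar*(u0^2+v0^2) - cr*(u1^2+v1^2))]
  have h4 : 0 ≤ ar*(u0^2+v0^2) + cr*(u1^2+v1^2) := by positivity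
  by_contra hneg
  push_neg at hneg
  have h5 : (ar*(u0^2+v0^2) + cr*(u1^2+v1^2))^2
      < (2*br*(u0*u1+v0*v1) + 2*bi*(v0*u1-u0*v1))^2 := by
    nlinarith [hneg, h4]
  nlinarith [h1, h2, h3, h5]

lemma psd2 (ar cr : ℝ) (bc : ℂ) (ha : 0 ≤ ar) (hc : 0 ≤ cr)
    (hb : Complex.normSq bc ≤ ar * cr) :
    (!![(ar:ℂ), bc; (starRingEnd ℂ) bc, (cr:ℂ)]).PosSemidef := by
  rw [Matrix.posSemidef_iff_dotProduct_mulVec]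
  constructor
  · ext i j
    fin_cases i <;> fin_cases j <;>
      simp [Matrix.conjTranspose_apply, Complex.conj_ofReal]
  · intro x
    have hx : star x ⬝ᵥ (!![(ar:ℂ), bc; (starRingEnd ℂ) bc, (cr:ℂ)] *ᵥ x) =
        (starRingEnd ℂ) (x 0) * ((ar:ℂ) * x 0 + bc * x 1) +
        (starRingEnd ℂ) (x 1) * ((starRingEnd ℂ) bc * x 0 + (cr:ℂ) * x 1) := by
      simp [dotProduct, Matrix.mulVec, Fin.sum_univ_two, mul_comm]
    rw [hx]
    have hx2 : (starRingEnd ℂ) (x 0) * ((ar:ℂ) * x 0 + bc * x 1) +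
        (starRingEnd ℂ) (x 1) * ((starRingEnd ℂ) bc * x 0 + (cr:ℂ) * x 1) =
        ((ar*((x 0).re^2+(x 0).im^2) + cr*((x 1).re^2+(x 1).im^2)
          + 2*bc.re*((x 0).re*(x 1).re+(x 0).im*(x 1).im)
          + 2*bc.im*((x 0).im*(x 1).re-(x 0).re*(x 1).im) : ℝ) : ℂ) := by
      apply Complex.ext <;>
        simp only [Complex.add_re, Complex.add_im, Complex.mul_re, Complex.mul_im,
          Complex.conj_re, Complex.conj_im, Complex.ofReal_re, Complex.ofReal_im] <;>
        ring
    rw [hx2, Complex.zero_le_real]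
    have hb' : bc.re^2 + bc.im^2 ≤ ar * cr := by
      rw [Complex.normSq_apply] at hb; nlinarith [hb]
    exact psd2_aux ar cr bc.re bc.im (x 0).re (x 0).im (x 1).re (x 1).im ha hc hb'

lemma key_ineq (pr pi qr qi rr ri sr si a b : ℝ) (h2 : a^2 = 2) (h3 : b^2 = 3) :
    (((1/9)*sr + (1/18)*rr*a + (1/18)*qr*a + (11/18)*pr)^2 + ((1/9)*si + (1/18)*ri*a + (1/18)*qi*a + (11/18)*pi)^2)/(13/18) + (((1/3)*sr + (1/18)*ri*a*b + (-1/18)*qi*a*b + (1/9)*pr)^2 + ((1/3)*si + (-1/18)*rr*a*b + (1/18)*qr*a*b + (1/9)*pi)^2)/(4/9) + (((2/9)*sr + (1/36)*ri*a*b + (1/36)*rr*a + (-1/36)*qi*a*b + (1/36)*qr*a + (1/9)*pr)^2 + ((2/9)*si + (1/36)*ri*a + (-1/36)*rr*a*b + (1/36)*qi*a + (1/36)*qr*a*b + (1/9)*pi)^2)/(1/3) + (((1/3)*sr + (-1/12)*ri*a*b + (-1/12)*rr*a + (1/12)*qi*a*b + (-1/12)*qr*a + (1/6)*pr)^2 +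 ((1/3)*si + (-1/12)*ri*a + (1/12)*rr*a*b + (-1/12)*qi*a + (-1/12)*qr*a*b + (1/6)*pi)^2)/(1/2) ≤
    (((1/2)*pr)^2 + ((1/2)*pi)^2)/(1/2) + (((1/3)*sr + (1/6)*rr*a + (1/6)*qr*a + (1/6)*pr)^2 + ((1/3)*si + (1/6)*ri*a + (1/6)*qi*a + (1/6)*pi)^2)/(1/2) + (((1/3)*sr + (1/12)*ri*a*b + (-1/12)*rr*a + (-1/12)*qi*a*b + (-1/12)*qr*a + (1/6)*pr)^2 + ((1/3)*si + (-1/12)*ri*a + (-1/12)*rr*a*b + (-1/12)*qi*a + (1/12)*qr*a*b + (1/6)*pi)^2)/(1/2) + (((1/3)*sr + (-1/12)*ri*a*b + (-1/12)*rr*a + (1/12)*qi*a*b + (-1/12)*qr*a + (1/6)*pr)^2 + ((1/3)*si + (-1/12)*ri*a + (1/12)*rr*a*b + (-1/12)*qi*a + (-1/12)*qr*a*b + (1/6)*pi)^2)/(1/2) := by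
  rw [← sub_nonneg]
  have key : ((((1/2)*pr)^2 + ((1/2)*pi)^2)/(1/2) + (((1/3)*sr + (1/6)*rr*a + (1/6)*qr*a + (1/6)*pr)^2 + ((1/3)*si + (1/6)*ri*a + (1/6)*qi*a + (1/6)*pi)^2)/(1/2) + (((1/3)*sr + (1/12)*ri*a*b + (-1/12)*rr*a + (-1/12)*qi*a*b + (-1/12)*qr*a + (1/6)*pr)^2 + ((1/3)*si + (-1/12)*ri*a + (-1/12)*rr*a*b + (-1/12)*qi*a + (1/12)*qr*a*b + (1/6)*pi)^2)/(1/2) + (((1/3)*sr + (-1/12)*ri*a*b + (-1/12)*rr*a + (1/12)*qi*a*b + (-1/12)*qr*a + (1/6)*pr)^2 + ((1/3)*si + (-1/12)*ri*a + (1/12)*rr*a*b + (-1/12)*qi*a + (-1/12)*qr*a*b + (1/6)*pi)^2)/(1/2)) - ((((1/9)*sr + (1/18)*rr*a + (1/18)*qr*a + (11/18)*pr)^2 + ((1/9)*si + (1/18)*ri*a + (1/18)*qi*a + (11/18)*pi)^2)/(13/18) + (((1/3)*sr + (1/18)*ri*a*b + (-1/18)*qi*a*b + (1/9)*pr)^2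 + ((1/3)*si + (-1/18)*rr*a*b + (1/18)*qr*a*b + (1/9)*pi)^2)/(4/9) + (((2/9)*sr + (1/36)*ri*a*b + (1/36)*rr*a + (-1/36)*qi*a*b + (1/36)*qr*a + (1/9)*pr)^2 + ((2/9)*si + (1/36)*ri*a + (-1/36)*rr*a*b + (1/36)*qi*a + (1/36)*qr*a*b + (1/9)*pi)^2)/(1/3) + (((1/3)*sr + (-1/12)*ri*a*b + (-1/12)*rr*a + (1/12)*qi*a*b + (-1/12)*qr*a + (1/6)*pr)^2 + ((1/3)*si + (-1/12)*ri*a + (1/12)*rr*a*b + (-1/12)*qi*a + (-1/12)*qr*a*b + (1/6)*pi)^2)/(1/2)) =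
      (1/230256)*(((-82)*sr + (13)*ri*a*b + (-80)*rr*a + (-13)*qi*a*b + (-80)*qr*a + (82)*pr)^2 + ((-82)*si + (-80)*ri*a + (-13)*rr*a*b + (-80)*qi*a + (13)*qr*a*b + (82)*pi)^2) + (23/984)*(((-1)*ri*b + (1)*rr + (2)*qr)^2 + ((1)*ri + (1)*rr*b + (2)*qi)^2) := by
    linear_combination ((23/656)*ri^2 + (23/5904)*ri^2*b^2 + (23/656)*rr^2 + (23/5904)*rr^2*b^2 + (23/328)*qi*ri + (-23/2952)*qi*ri*b^2 + (23/492)*qi*rr*b + (23/656)*qi^2 + (23/5904)*qi^2*b^2 + (-23/492)*qr*ri*b + (23/328)*qr*rr + (-23/2952)*qr*rr*b^2 + (23/656)*qr^2 + (23/5904)*qr^2*b^2) * h2 + ((-23/1476)*ri^2 + (-23/1476)*rr^2 + (-23/1476)*qi*ri + (23/2952)*qi^2 + (-23/1476)*qr*rr + (23/2952)*qr^2) * h3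
  rw [key]
  positivity

set_option maxHeartbeats 1000000 in
/-- The family of monotones `X ↦ Q_A(X)` is not complete for the
post-processing order: `(B_b)` is a POVM with nonzero effects and `Q_B(X) ≤ Q_E(X)` for
every `2 × 2` complex matrix `X`, yet `(B_b)` is *not* a classical post-processing of the
qubit SIC-POVM `(E_a)`. -/
theorem scaled_frame_monotones_not_complete :
    (∀ b, (Beffect b).PosSemidef) ∧ (∑ b, Beffect b = 1) ∧ (∀ b, Beffect b ≠ 0) ∧
    (∀ X : Matrix (Fin 2) (Fin 2) ℂ,
      ∑ b, ‖(Beffect b * X).trace‖ ^ 2 / ((Beffect b).trace).re ≤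
        ∑ a, ‖(sicEffect a * X).trace‖ ^ 2 / ((sicEffect a).trace).re) ∧
    ¬ ∃ μ : Fin 4 → Fin 4 → ℝ, (∀ b a, 0 ≤ μ b a) ∧ (∀ a, ∑ b, μ b a = 1) ∧
      (∀ b, Beffect b = ∑ a, (μ b a : ℂ) • sicEffect a) := by
  have h2R : Real.sqrt 2 * Real.sqrt 2 = 2 := Real.mul_self_sqrt (by norm_num)
  have h3R : Real.sqrt 3 * Real.sqrt 3 = 3 := Real.mul_self_sqrt (by norm_num)
  refine ⟨?_, ?_, ?_, ?_, ?_⟩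
  · -- positive semidefinite
    intro b
    fin_cases b
    · have hM : Beffect 0 = !![((11/18:ℝ):ℂ), ((Real.sqrt 2/18:ℝ):ℂ);
          (starRingEnd ℂ) ((Real.sqrt 2/18:ℝ):ℂ), ((1/9:ℝ):ℂ)] := by
        rw [Beff0]; ext i j
        fin_cases i <;> fin_cases j <;>
          · simp only [Matrix.cons_val_zero, Matrix.cons_val_one, Matrix.head_cons,
              Matrix.of_apply, Fin.mk_zero, Fin.mk_one, Complex.conj_ofReal]
            push_cast; ring
      show (Beffect 0).PosSemidef
      rw [hM]
      refine psd2 _ _ _ (by norm_num) (by norm_num) ?_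
      rw [Complex.normSq_ofReal]; nlinarith [h2R]
    · have hM : Beffect 1 = !![((1/9:ℝ):ℂ), ((-(Real.sqrt 2*Real.sqrt 3)/18:ℝ):ℂ) * Complex.I;
          (starRingEnd ℂ) (((-(Real.sqrt 2*Real.sqrt 3)/18:ℝ):ℂ) * Complex.I), ((1/3:ℝ):ℂ)] := by
        rw [Beff1]; ext i j
        fin_cases i <;> fin_cases j <;>
          · simp only [Matrix.cons_val_zero, Matrix.cons_val_one, Matrix.head_cons,
              Matrix.of_apply, Fin.mk_zero, Fin.mk_one, _root_.map_mul, Complex.conj_ofReal,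
              Complex.conj_I]
            push_cast; ring
      show (Beffect 1).PosSemidef
      rw [hM]
      refine psd2 _ _ _ (by norm_num) (by norm_num) ?_
      rw [Complex.normSq_mul, Complex.normSq_ofReal, Complex.normSq_I]
      nlinarith [h2R, h3R]
    · have hM : Beffect 2 = !![((1/9:ℝ):ℂ), ((Real.sqrt 2/36:ℝ):ℂ) * (1 - ((Real.sqrt 3:ℝ):ℂ) * Complex.I);
          (starRingEnd ℂ) (((Real.sqrt 2/36:ℝ):ℂ) * (1 - ((Real.sqrt 3:ℝ):ℂ) * Complex.I)), ((2/9:ℝ):ℂ)] := by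
        rw [Beff2]; ext i j
        fin_cases i <;> fin_cases j <;>
          · simp only [Matrix.cons_val_zero, Matrix.cons_val_one, Matrix.head_cons,
              Matrix.of_apply, Fin.mk_zero, Fin.mk_one, _root_.map_mul, map_sub, _root_.map_one,
              Complex.conj_ofReal, Complex.conj_I]
            push_cast; ring
      show (Beffect 2).PosSemidef
      rw [hM]
      refine psd2 _ _ _ (by norm_num) (by norm_num) ?_
      rw [Complex.normSq_mul, Complex.normSq_ofReal]
      have : Complex.normSq (1 - ((Real.sqrt 3:ℝ):ℂ) * Complex.I) = 1 + Real.sqrt 3 * Real.sqrt 3 := by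
        rw [Complex.normSq_apply]
        simp [Complex.sub_re, Complex.sub_im, Complex.mul_re, Complex.mul_im]
        try ring
      rw [this]
      nlinarith [h2R, h3R]
    · have hM : Beffect 3 = !![((1/6:ℝ):ℂ), ((Real.sqrt 2/12:ℝ):ℂ) * (-1 + ((Real.sqrt 3:ℝ):ℂ) * Complex.I);
          (starRingEnd ℂ) (((Real.sqrt 2/12:ℝ):ℂ) * (-1 + ((Real.sqrt 3:ℝ):ℂ) * Complex.I)), ((1/3:ℝ):ℂ)] := by
        rw [Beff3]; ext i j
        fin_cases i <;> fin_cases j <;>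
          · simp only [Matrix.cons_val_zero, Matrix.cons_val_one, Matrix.head_cons,
              Matrix.of_apply, Fin.mk_zero, Fin.mk_one, _root_.map_mul, map_add, map_neg,
              _root_.map_one, Complex.conj_ofReal, Complex.conj_I]
            push_cast; ring
      show (Beffect 3).PosSemidef
      rw [hM]
      refine psd2 _ _ _ (by norm_num) (by norm_num) ?_
      rw [Complex.normSq_mul, Complex.normSq_ofReal]
      have : Complex.normSq (-1 + ((Real.sqrt 3:ℝ):ℂ) * Complex.I) = 1 + Real.sqrt 3 * Real.sqrt 3 := by
        rw [Complex.normSq_apply]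
        simp [Complex.add_re, Complex.add_im, Complex.mul_re, Complex.mul_im]
        try ring
      rw [this]
      nlinarith [h2R, h3R]
  · -- sums to one
    rw [Fin.sum_univ_four, Beff0, Beff1, Beff2, Beff3]
    ext i j
    fin_cases i <;> fin_cases j <;>
      · simp only [Matrix.add_apply, Matrix.cons_val_zero, Matrix.cons_val_one,
          Matrix.head_cons, Matrix.of_apply, Fin.mk_zero, Fin.mk_one]
        rw [Matrix.one_apply]
        norm_num
        try ring
  · -- nonzero
    intro b
    fin_cases b <;> intro h
    · replace h : Beffect 0 = 0 := h
      rw [Beff0] at h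
      have h11 := congrFun (congrFun h 1) 1
      simp only [Matrix.cons_val_one, Matrix.head_cons, Matrix.of_apply, Matrix.zero_apply,
        Matrix.head_fin_const] at h11
      norm_num at h11
    · replace h : Beffect 1 = 0 := h
      rw [Beff1] at h
      have h11 := congrFun (congrFun h 1) 1
      simp only [Matrix.cons_val_one, Matrix.head_cons, Matrix.of_apply, Matrix.zero_apply,
        Matrix.head_fin_const] at h11
      norm_num at h11
    · replace h : Beffect 2 = 0 := h
      rw [Beff2] at h
      have h11 := congrFun (congrFun h 1) 1
      simp only [Matrix.cons_val_one, Matrix.head_cons, Matrix.of_apply, Matrix.zero_apply,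
        Matrix.head_fin_const] at h11
      norm_num at h11
    · replace h : Beffect 3 = 0 := h
      rw [Beff3] at h
      have h11 := congrFun (congrFun h 1) 1
      simp only [Matrix.cons_val_one, Matrix.head_cons, Matrix.of_apply, Matrix.zero_apply,
        Matrix.head_fin_const] at h11
      norm_num at h11
  · -- the scaled-frame inequality
    intro X
    have h2 : Real.sqrt 2 ^ 2 = 2 := Real.sq_sqrt (by norm_num)
    have h3 : Real.sqrt 3 ^ 2 = 3 := Real.sq_sqrt (by norm_num)
    rw [Fin.sum_univ_four, Fin.sum_univ_four]
    have tB0 : (Beffect 0 * X).trace = ((11/18:ℝ):ℂ) * X 0 0 + ((Real.sqrt 2/18:ℝ):ℂ) * X 1 0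
        + ((Real.sqrt 2/18:ℝ):ℂ) * X 0 1 + ((1/9:ℝ):ℂ) * X 1 1 := by
      rw [Beff0, Matrix.trace_fin_two]
      simp only [Matrix.mul_apply, Fin.sum_univ_two, Matrix.cons_val_zero, Matrix.cons_val_one,
        Matrix.head_cons, Matrix.of_apply]
      push_cast; ring
    have tB1 : (Beffect 1 * X).trace = ((1/9:ℝ):ℂ) * X 0 0
        - ((Real.sqrt 2*Real.sqrt 3/18:ℝ):ℂ) * Complex.I * X 1 0
        + ((Real.sqrt 2*Real.sqrt 3/18:ℝ):ℂ) * Complex.I * X 0 1 + ((1/3:ℝ):ℂ) * X 1 1 := by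
      rw [Beff1, Matrix.trace_fin_two]
      simp only [Matrix.mul_apply, Fin.sum_univ_two, Matrix.cons_val_zero, Matrix.cons_val_one,
        Matrix.head_cons, Matrix.of_apply]
      push_cast; ring
    have tB2 : (Beffect 2 * X).trace = ((1/9:ℝ):ℂ) * X 0 0
        + ((Real.sqrt 2/36:ℝ):ℂ) * (1 - ((Real.sqrt 3:ℝ):ℂ) * Complex.I) * X 1 0
        + ((Real.sqrt 2/36:ℝ):ℂ) * (1 + ((Real.sqrt 3:ℝ):ℂ) * Complex.I) * X 0 1
        + ((2/9:ℝ):ℂ) * X 1 1 := by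
      rw [Beff2, Matrix.trace_fin_two]
      simp only [Matrix.mul_apply, Fin.sum_univ_two, Matrix.cons_val_zero, Matrix.cons_val_one,
        Matrix.head_cons, Matrix.of_apply]
      push_cast; ring
    have tB3 : (Beffect 3 * X).trace = ((1/6:ℝ):ℂ) * X 0 0
        + ((Real.sqrt 2/12:ℝ):ℂ) * (-1 + ((Real.sqrt 3:ℝ):ℂ) * Complex.I) * X 1 0
        + ((Real.sqrt 2/12:ℝ):ℂ) * (-1 - ((Real.sqrt 3:ℝ):ℂ) * Complex.I) * X 0 1
        + ((1/3:ℝ):ℂ) * X 1 1 := by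
      rw [Beff3, Matrix.trace_fin_two]
      simp only [Matrix.mul_apply, Fin.sum_univ_two, Matrix.cons_val_zero, Matrix.cons_val_one,
        Matrix.head_cons, Matrix.of_apply]
      push_cast; ring
    have tE0 : (sicEffect 0 * X).trace = ((1/2:ℝ):ℂ) * X 0 0 := by
      rw [sicEffect0, Matrix.trace_fin_two]
      simp only [Matrix.mul_apply, Fin.sum_univ_two, Matrix.cons_val_zero, Matrix.cons_val_one,
        Matrix.head_cons, Matrix.of_apply]
      push_cast; ring
    have tE1 : (sicEffect 1 * X).trace = ((1/6:ℝ):ℂ) * X 0 0 + ((Real.sqrt 2/6:ℝ):ℂ) * X 1 0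
        + ((Real.sqrt 2/6:ℝ):ℂ) * X 0 1 + ((1/3:ℝ):ℂ) * X 1 1 := by
      rw [sicEffect1, Matrix.trace_fin_two]
      simp only [Matrix.mul_apply, Fin.sum_univ_two, Matrix.cons_val_zero, Matrix.cons_val_one,
        Matrix.head_cons, Matrix.of_apply]
      push_cast; ring
    have tE2 : (sicEffect 2 * X).trace = ((1/6:ℝ):ℂ) * X 0 0
        + ((Real.sqrt 2/12:ℝ):ℂ) * (-1 - ((Real.sqrt 3:ℝ):ℂ) * Complex.I) * X 1 0
        + ((Real.sqrt 2/12:ℝ):ℂ) * (-1 + ((Real.sqrt 3:ℝ):ℂ) * Complex.I) * X 0 1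
        + ((1/3:ℝ):ℂ) * X 1 1 := by
      rw [sicEffect2, Matrix.trace_fin_two]
      simp only [Matrix.mul_apply, Fin.sum_univ_two, Matrix.cons_val_zero, Matrix.cons_val_one,
        Matrix.head_cons, Matrix.of_apply]
      push_cast; ring
    have tE3 : (sicEffect 3 * X).trace = ((1/6:ℝ):ℂ) * X 0 0
        + ((Real.sqrt 2/12:ℝ):ℂ) * (-1 + ((Real.sqrt 3:ℝ):ℂ) * Complex.I) * X 1 0
        + ((Real.sqrt 2/12:ℝ):ℂ) * (-1 - ((Real.sqrt 3:ℝ):ℂ) * Complex.I) * X 0 1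
        + ((1/3:ℝ):ℂ) * X 1 1 := by
      rw [sicEffect3, Matrix.trace_fin_two]
      simp only [Matrix.mul_apply, Fin.sum_univ_two, Matrix.cons_val_zero, Matrix.cons_val_one,
        Matrix.head_cons, Matrix.of_apply]
      push_cast; ring
    have rB0 : (Beffect 0).trace.re = 13/18 := by
      have h : (Beffect 0).trace = ((13/18:ℝ):ℂ) := by
        rw [Beff0, Matrix.trace_fin_two]
        simp only [Matrix.cons_val_zero, Matrix.cons_val_one, Matrix.head_cons, Matrix.of_apply]
        push_cast; norm_num
      rw [h, Complex.ofReal_re]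
    have rB1 : (Beffect 1).trace.re = 4/9 := by
      have h : (Beffect 1).trace = ((4/9:ℝ):ℂ) := by
        rw [Beff1, Matrix.trace_fin_two]
        simp only [Matrix.cons_val_zero, Matrix.cons_val_one, Matrix.head_cons, Matrix.of_apply]
        push_cast; norm_num
      rw [h, Complex.ofReal_re]
    have rB2 : (Beffect 2).trace.re = 1/3 := by
      have h : (Beffect 2).trace = ((1/3:ℝ):ℂ) := by
        rw [Beff2, Matrix.trace_fin_two]
        simp only [Matrix.cons_val_zero, Matrix.cons_val_one, Matrix.head_cons, Matrix.of_apply]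
        push_cast; norm_num
      rw [h, Complex.ofReal_re]
    have rB3 : (Beffect 3).trace.re = 1/2 := by
      have h : (Beffect 3).trace = ((1/2:ℝ):ℂ) := by
        rw [Beff3, Matrix.trace_fin_two]
        simp only [Matrix.cons_val_zero, Matrix.cons_val_one, Matrix.head_cons, Matrix.of_apply]
        push_cast; norm_num
      rw [h, Complex.ofReal_re]
    have rE0 : (sicEffect 0).trace.re = 1/2 := by
      have h : (sicEffect 0).trace = ((1/2:ℝ):ℂ) := by
        rw [sicEffect0, Matrix.trace_fin_two]
        simp only [Matrix.cons_val_zero, Matrix.cons_val_one, Matrix.head_cons, Matrix.of_apply]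
        push_cast; norm_num
      rw [h, Complex.ofReal_re]
    have rE1 : (sicEffect 1).trace.re = 1/2 := by
      have h : (sicEffect 1).trace = ((1/2:ℝ):ℂ) := by
        rw [sicEffect1, Matrix.trace_fin_two]
        simp only [Matrix.cons_val_zero, Matrix.cons_val_one, Matrix.head_cons, Matrix.of_apply]
        push_cast; norm_num
      rw [h, Complex.ofReal_re]
    have rE2 : (sicEffect 2).trace.re = 1/2 := by
      have h : (sicEffect 2).trace = ((1/2:ℝ):ℂ) := by
        rw [sicEffect2, Matrix.trace_fin_two]
        simp only [Matrix.cons_val_zero, Matrix.cons_val_one, Matrix.head_cons, Matrix.of_apply]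
        push_cast; norm_num
      rw [h, Complex.ofReal_re]
    have rE3 : (sicEffect 3).trace.re = 1/2 := by
      have h : (sicEffect 3).trace = ((1/2:ℝ):ℂ) := by
        rw [sicEffect3, Matrix.trace_fin_two]
        simp only [Matrix.cons_val_zero, Matrix.cons_val_one, Matrix.head_cons, Matrix.of_apply]
        push_cast; norm_num
      rw [h, Complex.ofReal_re]
    rw [tB0, tB1, tB2, tB3, tE0, tE1, tE2, tE3, rB0, rB1, rB2, rB3, rE0, rE1, rE2, rE3]
    simp only [Complex.sq_norm, Complex.normSq_apply, Complex.add_re,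
      Complex.add_im, Complex.sub_re, Complex.sub_im, Complex.mul_re, Complex.mul_im,
      Complex.one_re, Complex.one_im, Complex.neg_re, Complex.neg_im,
      Complex.ofReal_re, Complex.ofReal_im, Complex.I_re, Complex.I_im]
    linarith [key_ineq (X 0 0).re (X 0 0).im (X 0 1).re (X 0 1).im (X 1 0).re (X 1 0).im
      (X 1 1).re (X 1 1).im (Real.sqrt 2) (Real.sqrt 3) h2 h3]
  · -- no post-processing
    rintro ⟨μ, hpos, hsum, heq⟩
    have h1 := heq 1
    rw [Beff1, Fin.sum_univ_four, sicEffect0, sicEffect1, sicEffect2, sicEffect3] at h1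
    have e00 := congrFun (congrFun h1 0) 0
    have e11 := congrFun (congrFun h1 1) 1
    simp only [Matrix.add_apply, Matrix.smul_apply, Matrix.cons_val_zero, Matrix.cons_val_one,
      Matrix.head_cons, Matrix.of_apply, smul_eq_mul] at e00 e11
    have hm0 : ((μ 1 0 : ℝ) : ℂ) = ((-(1/9) : ℝ) : ℂ) := by
      push_cast; linear_combination -2*e00 + e11
    have hm0' : μ 1 0 = -(1/9) := Complex.ofReal_inj.mp hm0
    linarith [hpos 1 0]
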